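/- Let θ : (Fin d → ℝ) → ℝ be nonnegative and measurable with the set {x | θ x > 0} of positive Lebesgue measure, and let Σ : Matrix ι ι ℝ. Define the dual functional J(Λ) := (∑ i, ∑ j, Λ i j * Σ i j) − ∫ θ(x) * Real.log (G(x)ᵀ Λ G(x)) dx. Let Λ₁ ≠ Λ₂ be class-constant symmetric positive-definite matrices such that x ↦ θ(x) * Real.log (G(x)ᵀ Λ G(x)) is Lebesgue integrable for each Λ ∈ {Λ₁, Λ₂, (Λ₁ + Λ₂)/2}. Then J((Λ₁ + Λ₂)/2) < (J(Λ₁) + J(Λ₂))/2; that is, the dual functional J_θ is strictly convex (Lemma 4.5 of the paper, in midpoint form). -/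

import Mathlib

/-!
By strict concavity of `log`, the integrand `θ x * log q(x, Λ)` at the midpoint of `Λ₁` and `Λ₂`
dominates the average of the integrands at `Λ₁` and `Λ₂`, strictly where `θ x > 0` and
`q(x, Λ₁) ≠ q(x, Λ₂)`, while the trace term is linear in `Λ`. The coefficient of `xᵐ` in the
polynomial `q(·, Λ)` is the number of pairs `(i, j)` with `i + j = m` times the common value of
a class-constant `Λ` on them, so `Λ ↦ q(·, Λ)` is injective on class-constant matrices. Hence
`q(·, Λ₁) - q(·, Λ₂)` is a nonzero polynomial, whose zero set is Lebesgue-null (Fubini and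
induction on the number of variables), and the strict inequality holds on a set of positive
measure.
-/

open MeasureTheory

/-- The monomial vector `G(x) = G(x₁) ⊗ ⋯ ⊗ G(x_d)`. -/
noncomputable def Gvec (n d : ℕ) (x : Fin d → ℝ) (i : Fin d → Fin (n + 1)) : ℝ :=
  ∏ t, x t ^ (i t : ℕ)

/-- The quadratic form `q(x, Λ) = G(x)ᵀ Λ G(x)`. -/
noncomputable def quadForm (n d : ℕ)
    (Λ : Matrix (Fin d → Fin (n + 1)) (Fin d → Fin (n + 1)) ℝ)
    (x : Fin d → ℝ) : ℝ :=
  ∑ i, ∑ j, Gvec n d x i * Λ i j * Gvec n d x j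

/-- Class-constant matrices (the paper's parametrization (21)). -/
def ClassConstant (n d : ℕ)
    (Λ : Matrix (Fin d → Fin (n + 1)) (Fin d → Fin (n + 1)) ℝ) : Prop :=
  ∀ i j i' j' : Fin d → Fin (n + 1),
    (∀ t, (i t : ℕ) + (j t : ℕ) = (i' t : ℕ) + (j' t : ℕ)) → Λ i j = Λ i' j'

theorem Polynomial.ae_eval_ne_zero {q : Polynomial ℝ} (hq : q ≠ 0) : ∀ᵐ a : ℝ, q.eval a ≠ 0 :=
  (Polynomial.finite_setOfPred_isRoot hq).countable.ae_notMem volume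

theorem MvPolynomial.ae_eval_ne_zero : ∀ {d : ℕ} {p : MvPolynomial (Fin d) ℝ}, p ≠ 0 →
    ∀ᵐ x : Fin d → ℝ, MvPolynomial.eval x p ≠ 0
  | 0, p, hp => .of_forall fun x => by
      rwa [MvPolynomial.eq_C_of_isEmpty p, MvPolynomial.eval_C, Ne, ← MvPolynomial.C_eq_zero,
        ← MvPolynomial.eq_C_of_isEmpty]
  | d + 1, p, hp => by
    set Q := MvPolynomial.finSuccEquiv ℝ d p
    have hQ : Q.leadingCoeff ≠ 0 := by simpa [Q] using hp
    -- off the zero set of the leading coefficient, `a ↦ p (a, y)` is a nonzero polynomial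
    have hslice : ∀ᵐ y : Fin d → ℝ, ∀ᵐ a : ℝ, MvPolynomial.eval (Fin.cons a y) p ≠ 0 := by
      filter_upwards [MvPolynomial.ae_eval_ne_zero hQ] with y hy
      have hQy : Q.map (MvPolynomial.eval y) ≠ 0 := fun h => hy <| by
        rw [Polynomial.leadingCoeff, ← Polynomial.coeff_map, h, Polynomial.coeff_zero]
      simpa only [MvPolynomial.eval_eq_eval_mv_eval'] using Polynomial.ae_eval_ne_zero hQy
    have hmeas :
        MeasurableSet {z : ℝ × (Fin d → ℝ) | MvPolynomial.eval (Fin.cons z.1 z.2) p ≠ 0} :=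
      ((MvPolynomial.continuous_eval p).comp
        (continuous_fst.finCons continuous_snd)).measurable (measurableSet_singleton 0).compl
    have hprod : ∀ᵐ z : ℝ × (Fin d → ℝ), MvPolynomial.eval (Fin.cons z.1 z.2) p ≠ 0 :=
      (Measure.ae_prod_iff_ae_ae hmeas).2 ((Measure.ae_ae_comm hmeas).2 hslice)
    have he := (volume_preserving_piFinSuccAbove (fun _ : Fin (d + 1) => ℝ) 0).quasiMeasurePreserving
    simpa using he.ae hprod

theorem Real.add_log_div_two_lt {a b : ℝ} (ha : 0 < a) (hb : 0 < b) (hab : a ≠ b) :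
    (Real.log a + Real.log b) / 2 < Real.log ((a + b) / 2) := by
  have := strictConcaveOn_log_Ioi.2 ha hb hab (by norm_num : (0 : ℝ) < 1 / 2)
    (by norm_num : (0 : ℝ) < 1 / 2) (by norm_num)
  simp only [smul_eq_mul] at this
  rw [show (a + b) / 2 = 1 / 2 * a + 1 / 2 * b by ring]
  linarith

theorem add_mul_log_div_two_lt {w a b : ℝ} (hw : 0 < w) (ha : 0 < a) (hb : 0 < b)
    (hab : a ≠ b) : (w * Real.log a + w * Real.log b) / 2 < w * Real.log ((a + b) / 2) := by
  rw [← mul_add, mul_div_assoc]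
  exact mul_lt_mul_of_pos_left (Real.add_log_div_two_lt ha hb hab) hw

theorem add_mul_log_div_two_le {w a b : ℝ} (hw : 0 ≤ w) (ha : 0 < a) (hb : 0 < b) :
    (w * Real.log a + w * Real.log b) / 2 ≤ w * Real.log ((a + b) / 2) := by
  rcases eq_or_ne a b with rfl | hab
  · rw [add_self_div_two, add_self_div_two]
  · rw [← mul_add, mul_div_assoc]
    exact mul_le_mul_of_nonneg_left (Real.add_log_div_two_lt ha hb hab).le hw

theorem MeasureTheory.add_integral_div_two_lt {α : Type*} [MeasurableSpace α] {μ : Measure α}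
    {f₁ f₂ g : α → ℝ} (hf₁ : Integrable f₁ μ) (hf₂ : Integrable f₂ μ) (hg : Integrable g μ)
    (hle : ∀ x, (f₁ x + f₂ x) / 2 ≤ g x) (hlt : 0 < μ {x | (f₁ x + f₂ x) / 2 < g x}) :
    ((∫ x, f₁ x ∂μ) + ∫ x, f₂ x ∂μ) / 2 < ∫ x, g x ∂μ := by
  have hf : Integrable (fun x => (f₁ x + f₂ x) / 2) μ := (hf₁.add hf₂).div_const 2
  have hgap : 0 < ∫ x, g x - (f₁ x + f₂ x) / 2 ∂μ := by
    refine (integral_pos_iff_support_of_nonneg (fun x => sub_nonneg.2 (hle x)) (hg.sub hf)).2 ?_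
    exact hlt.trans_le (measure_mono fun x hx => (sub_pos.2 hx).ne')
  rw [integral_sub hg hf, integral_div, integral_add hf₁ hf₂] at hgap
  linarith

open Finset

section QuadForm

variable {n d : ℕ}

local notation "ι" => Fin d → Fin (n + 1)

noncomputable def classExponent (i j : ι) : Fin d →₀ ℕ :=
  Finsupp.equivFunOnFinite.symm fun t => (i t : ℕ) + j t

noncomputable def quadFormPoly (Λ : Matrix ι ι ℝ) : MvPolynomial (Fin d) ℝ :=
  ∑ i, ∑ j, MvPolynomial.monomial (classExponent i j) (Λ i j)

theorem eval_quadFormPoly (Λ : Matrix ι ι ℝ) (x : Fin d → ℝ) :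
    MvPolynomial.eval x (quadFormPoly Λ) = quadForm n d Λ x := by
  simp only [quadFormPoly, quadForm, Gvec, classExponent, map_sum, MvPolynomial.eval_monomial,
    Finsupp.prod_pow, Finsupp.coe_equivFunOnFinite_symm, pow_add, prod_mul_distrib]
  exact sum_congr rfl fun i _ => sum_congr rfl fun j _ => by ring

theorem coeff_quadFormPoly (Λ : Matrix ι ι ℝ) (m : Fin d →₀ ℕ) :
    (quadFormPoly Λ).coeff m =
      ∑ p : ι × ι, if classExponent p.1 p.2 = m then Λ p.1 p.2 else 0 := by
  simp only [quadFormPoly, MvPolynomial.coeff_sum, MvPolynomial.coeff_monomial,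
    Fintype.sum_prod_type]

theorem coeff_quadFormPoly_classExponent {Λ : Matrix ι ι ℝ}
    (hΛ : ClassConstant n d Λ) (i j : ι) :
    (quadFormPoly Λ).coeff (classExponent i j) =
      #{p : ι × ι | classExponent p.1 p.2 = classExponent i j} * Λ i j := by
  have hclass : ∀ p ∈ ({p : ι × ι | classExponent p.1 p.2 = classExponent i j} : Finset _),
      Λ p.1 p.2 = Λ i j := fun p hp =>
    hΛ p.1 p.2 i j (by simpa [classExponent, funext_iff] using (mem_filter.1 hp).2)
  rw [coeff_quadFormPoly, ← sum_filter, sum_congr rfl hclass, sum_const, nsmul_eq_mul]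

theorem ClassConstant.eq_of_quadFormPoly_eq {Λ₁ Λ₂ : Matrix ι ι ℝ}
    (h₁ : ClassConstant n d Λ₁) (h₂ : ClassConstant n d Λ₂)
    (h : quadFormPoly Λ₁ = quadFormPoly Λ₂) : Λ₁ = Λ₂ := by
  ext i j
  have hcard : (0 : ℝ) < #{p : ι × ι | classExponent p.1 p.2 = classExponent i j} :=
    Nat.cast_pos.2 (card_pos.2 ⟨(i, j), by simp⟩)
  have := congr_arg (MvPolynomial.coeff (classExponent i j)) h
  rw [coeff_quadFormPoly_classExponent h₁, coeff_quadFormPoly_classExponent h₂] at this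
  exact mul_left_cancel₀ hcard.ne' this

theorem Gvec_ne_zero (x : Fin d → ℝ) : Gvec n d x ≠ 0 := fun h => by
  simpa [Gvec] using congr_fun h 0

theorem quadForm_pos {Λ : Matrix ι ι ℝ}
    (hΛ : ∀ v : ι → ℝ, v ≠ 0 → 0 < ∑ i, ∑ j, v i * Λ i j * v j) (x : Fin d → ℝ) :
    0 < quadForm n d Λ x :=
  hΛ _ (Gvec_ne_zero x)

theorem quadForm_midpoint (Λ₁ Λ₂ : Matrix ι ι ℝ) (x : Fin d → ℝ) :
    quadForm n d ((1 / 2 : ℝ) • (Λ₁ + Λ₂)) x = (quadForm n d Λ₁ x + quadForm n d Λ₂ x) / 2 := by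
  simp only [quadForm, Matrix.smul_apply, Matrix.add_apply, smul_eq_mul, ← sum_add_distrib,
    sum_div]
  exact sum_congr rfl fun i _ => sum_congr rfl fun j _ => by ring

theorem volume_setOf_quadForm_eq_eq_zero {Λ₁ Λ₂ : Matrix ι ι ℝ} (h₁ : ClassConstant n d Λ₁)
    (h₂ : ClassConstant n d Λ₂) (hne : Λ₁ ≠ Λ₂) :
    volume {x | quadForm n d Λ₁ x = quadForm n d Λ₂ x} = 0 := by
  have hp : quadFormPoly Λ₁ - quadFormPoly Λ₂ ≠ 0 :=
    sub_ne_zero.2 fun h => hne (h₁.eq_of_quadFormPoly_eq h₂ h)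
  simpa [ae_iff, eval_quadFormPoly, sub_eq_zero] using MvPolynomial.ae_eval_ne_zero hp

end QuadForm

theorem dual_functional_strictly_convex_general (n d : ℕ)
    (θ : (Fin d → ℝ) → ℝ) (hθ0 : ∀ x, 0 ≤ θ x)
    (hθpos : 0 < volume {x : Fin d → ℝ | 0 < θ x})
    (S : Matrix (Fin d → Fin (n + 1)) (Fin d → Fin (n + 1)) ℝ)
    (J : Matrix (Fin d → Fin (n + 1)) (Fin d → Fin (n + 1)) ℝ → ℝ)
    (hJ : ∀ Λ, J Λ = (∑ i, ∑ j, Λ i j * S i j)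
      - ∫ x : Fin d → ℝ, θ x * Real.log (quadForm n d Λ x))
    (Λ₁ Λ₂ : Matrix (Fin d → Fin (n + 1)) (Fin d → Fin (n + 1)) ℝ)
    (hne : Λ₁ ≠ Λ₂)
    (hcc₁ : ClassConstant n d Λ₁) (hcc₂ : ClassConstant n d Λ₂)
    (hpd₁ : ∀ v : (Fin d → Fin (n + 1)) → ℝ, v ≠ 0 →
      0 < ∑ i, ∑ j, v i * Λ₁ i j * v j)
    (hpd₂ : ∀ v : (Fin d → Fin (n + 1)) → ℝ, v ≠ 0 →
      0 < ∑ i, ∑ j, v i * Λ₂ i j * v j)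
    (hint₁ : Integrable (fun x : Fin d → ℝ => θ x * Real.log (quadForm n d Λ₁ x)))
    (hint₂ : Integrable (fun x : Fin d → ℝ => θ x * Real.log (quadForm n d Λ₂ x)))
    (hintm : Integrable (fun x : Fin d → ℝ =>
      θ x * Real.log (quadForm n d ((1 / 2 : ℝ) • (Λ₁ + Λ₂)) x))) :
    J ((1 / 2 : ℝ) • (Λ₁ + Λ₂)) < (J Λ₁ + J Λ₂) / 2 := by
  have hq₁ := quadForm_pos hpd₁
  have hq₂ := quadForm_pos hpd₂
  have hle : ∀ x, (θ x * Real.log (quadForm n d Λ₁ x) + θ x * Real.log (quadForm n d Λ₂ x)) / 2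
      ≤ θ x * Real.log (quadForm n d ((1 / 2 : ℝ) • (Λ₁ + Λ₂)) x) := fun x => by
    rw [quadForm_midpoint]
    exact add_mul_log_div_two_le (hθ0 x) (hq₁ x) (hq₂ x)
  have hlt : 0 < volume {x | (θ x * Real.log (quadForm n d Λ₁ x)
      + θ x * Real.log (quadForm n d Λ₂ x)) / 2
      < θ x * Real.log (quadForm n d ((1 / 2 : ℝ) • (Λ₁ + Λ₂)) x)} := by
    rw [← measure_sdiff_null (volume_setOf_quadForm_eq_eq_zero hcc₁ hcc₂ hne)] at hθpos
    refine hθpos.trans_le (measure_mono fun x ⟨hθx, hqx⟩ => ?_)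
    rw [Set.mem_ofPred_eq, quadForm_midpoint]
    exact add_mul_log_div_two_lt hθx (hq₁ x) (hq₂ x) hqx
  have htrace : ∑ i, ∑ j, ((1 / 2 : ℝ) • (Λ₁ + Λ₂)) i j * S i j
      = ((∑ i, ∑ j, Λ₁ i j * S i j) + ∑ i, ∑ j, Λ₂ i j * S i j) / 2 := by
    simp only [Matrix.smul_apply, Matrix.add_apply, smul_eq_mul, ← sum_add_distrib, sum_div]
    exact sum_congr rfl fun i _ => sum_congr rfl fun j _ => by ring
  have hint := add_integral_div_two_lt hint₁ hint₂ hintm hle hlt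
  rw [hJ, hJ, hJ, htrace]
  linarith

/-- Lemma 4.5, midpoint form: the dual functional
`J(Λ) = tr(ΛΣ) − ∫ θ log q(·,Λ)` is strictly convex on class-constant symmetric
positive-definite matrices. -/
theorem dual_functional_strictly_convex (n d : ℕ) (hd : 1 ≤ d)
    (θ : (Fin d → ℝ) → ℝ) (hθ0 : ∀ x, 0 ≤ θ x) (hθm : Measurable θ)
    (hθpos : 0 < volume {x : Fin d → ℝ | 0 < θ x})
    (S : Matrix (Fin d → Fin (n + 1)) (Fin d → Fin (n + 1)) ℝ)
    (J : Matrix (Fin d → Fin (n + 1)) (Fin d → Fin (n + 1)) ℝ → ℝ)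
    (hJ : ∀ Λ, J Λ = (∑ i, ∑ j, Λ i j * S i j)
      - ∫ x : Fin d → ℝ, θ x * Real.log (quadForm n d Λ x))
    (Λ₁ Λ₂ : Matrix (Fin d → Fin (n + 1)) (Fin d → Fin (n + 1)) ℝ)
    (hne : Λ₁ ≠ Λ₂)
    (hcc₁ : ClassConstant n d Λ₁) (hcc₂ : ClassConstant n d Λ₂)
    (hsym₁ : Λ₁.transpose = Λ₁) (hsym₂ : Λ₂.transpose = Λ₂)
    (hpd₁ : ∀ v : (Fin d → Fin (n + 1)) → ℝ, v ≠ 0 →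
      0 < ∑ i, ∑ j, v i * Λ₁ i j * v j)
    (hpd₂ : ∀ v : (Fin d → Fin (n + 1)) → ℝ, v ≠ 0 →
      0 < ∑ i, ∑ j, v i * Λ₂ i j * v j)
    (hint₁ : Integrable (fun x : Fin d → ℝ => θ x * Real.log (quadForm n d Λ₁ x)))
    (hint₂ : Integrable (fun x : Fin d → ℝ => θ x * Real.log (quadForm n d Λ₂ x)))
    (hintm : Integrable (fun x : Fin d → ℝ =>
      θ x * Real.log (quadForm n d ((1 / 2 : ℝ) • (Λ₁ + Λ₂)) x))) :
    J ((1 / 2 : ℝ) • (Λ₁ + Λ₂)) < (J Λ₁ + J Λ₂) / 2 :=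
  dual_functional_strictly_convex_general n d θ hθ0 hθpos S J hJ Λ₁ Λ₂ hne hcc₁ hcc₂ hpd₁ hpd₂ hint₁
    hint₂ hintm
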